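/- Let Γ=(G,σ) be a weighted signed graph and μ a measure on V. For any nonzero function f : V → ℝ there exists t' ∈ [0, max_{u∈V} f(u)²] such that the pair (V_f(√t'), V_f(−√t')) has nonempty union and β^σ(V_f(√t'), V_f(−√t')) ≤ √(2 · d_μ^w · R^σ_μ(f)), where for t > 0, V_f(t) = {u : f(u) ≥ t} and V_f(−t) = {u : f(u) ≤ −t}, while V_f(√0) = {u : f(u) ≥ 0} and V_f(−√0) = {u : f(u) < 0}. -/
import Mathlib


open Finset Real

open scoped Classical

noncomputable section

namespace SignedGraphAux

/-- predecessor of `s` in `S ∪ {0}` (largest element `< s`). -/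
def predS (S : Finset ℝ) (s : ℝ) : ℝ :=
  (insert (0:ℝ) (S.filter (fun x => x < s))).max' (Finset.insert_nonempty _ _)

lemma predS_lt {S : Finset ℝ} {s : ℝ} (hs : 0 < s) : predS S s < s := by
  rw [predS, Finset.max'_lt_iff]
  intro y hy
  rcases Finset.mem_insert.1 hy with h | h
  · simpa [h] using hs
  · exact (Finset.mem_filter.1 h).2

lemma predS_nonneg (S : Finset ℝ) (s : ℝ) : 0 ≤ predS S s :=
  Finset.le_max' _ _ (Finset.mem_insert_self _ _)

lemma predS_mem {S : Finset ℝ} (h0 : (0:ℝ) ∈ S) (s : ℝ) : predS S s ∈ S := by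
  have h := Finset.max'_mem (insert (0:ℝ) (S.filter (fun x => x < s)))
    (Finset.insert_nonempty _ _)
  rcases Finset.mem_insert.1 h with h' | h'
  · rw [predS, h']; exact h0
  · exact (Finset.mem_filter.1 h').1

lemma le_predS {S : Finset ℝ} {x s : ℝ} (hx : x ∈ S) (hxs : x < s) : x ≤ predS S s := by
  rw [predS]
  exact Finset.le_max' (insert (0:ℝ) (S.filter (fun y => y < s))) x
    (Finset.mem_insert_of_mem (Finset.mem_filter.2 ⟨hx, hxs⟩))

lemma sum_gaps_aux {S : Finset ℝ} (h0 : (0:ℝ) ∈ S) :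
    ∀ n : ℕ, ∀ c : ℝ, c ∈ S → 0 ≤ c →
      (S.filter (fun s => 0 < s ∧ s ≤ c)).card ≤ n →
      ∑ s ∈ S.filter (fun s => 0 < s ∧ s ≤ c), (s - predS S s) = c := by
  intro n
  induction n with
  | zero =>
    intro c hc hc0 hcard
    rcases eq_or_lt_of_le hc0 with h | h
    · have he : S.filter (fun s => 0 < s ∧ s ≤ c) = ∅ := by
        refine Finset.filter_eq_empty_iff.2 fun s _ => ?_
        rintro ⟨h1, h2⟩; linarith
      rw [he]; simpa using h
    · exfalso
      have : c ∈ S.filter (fun s => 0 < s ∧ s ≤ c) :=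
        Finset.mem_filter.2 ⟨hc, h, le_refl c⟩
      have := Finset.card_pos.2 ⟨c, this⟩
      omega
  | succ n ih =>
    intro c hc hc0 hcard
    rcases eq_or_lt_of_le hc0 with h | h
    · have he : S.filter (fun s => 0 < s ∧ s ≤ c) = ∅ := by
        refine Finset.filter_eq_empty_iff.2 fun s _ => ?_
        rintro ⟨h1, h2⟩; linarith
      rw [he]; simpa using h
    · have hp_mem : predS S c ∈ S := predS_mem h0 c
      have hplt : predS S c < c := predS_lt h
      have hp0 : 0 ≤ predS S c := predS_nonneg S c
      have hset : S.filter (fun s => 0 < s ∧ s ≤ c)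
          = insert c (S.filter (fun s => 0 < s ∧ s ≤ predS S c)) := by
        ext x
        simp only [Finset.mem_filter, Finset.mem_insert]
        constructor
        · rintro ⟨hxS, hx0, hxc⟩
          rcases eq_or_lt_of_le hxc with h' | h'
          · exact Or.inl h'
          · exact Or.inr ⟨hxS, hx0, le_predS hxS h'⟩
        · rintro (rfl | ⟨hxS, hx0, hxp⟩)
          · exact ⟨hc, h, le_refl _⟩
          · exact ⟨hxS, hx0, hxp.trans hplt.le⟩
      have hnotmem : c ∉ S.filter (fun s => 0 < s ∧ s ≤ predS S c) := by
        simp only [Finset.mem_filter]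
        rintro ⟨-, -, hcp⟩; linarith
      have hcard' : (S.filter (fun s => 0 < s ∧ s ≤ predS S c)).card ≤ n := by
        rw [hset, Finset.card_insert_of_notMem hnotmem] at hcard
        omega
      rw [hset, Finset.sum_insert hnotmem, ih (predS S c) hp_mem hp0 hcard']
      ring

lemma sum_gaps {S : Finset ℝ} (h0 : (0:ℝ) ∈ S) {c : ℝ} (hc : c ∈ S) (hc0 : 0 ≤ c) :
    ∑ s ∈ S.filter (fun s => 0 < s ∧ s ≤ c), (s - predS S s) = c :=
  sum_gaps_aux h0 _ c hc hc0 le_rfl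

lemma sum_gaps_between {S : Finset ℝ} (h0 : (0:ℝ) ∈ S) {a b : ℝ} (ha : a ∈ S) (hb : b ∈ S)
    (hb0 : 0 ≤ b) (hba : b ≤ a) :
    ∑ s ∈ S.filter (fun s => b < s ∧ s ≤ a), (s - predS S s) = a - b := by
  have hsub : S.filter (fun s => 0 < s ∧ s ≤ b) ⊆ S.filter (fun s => 0 < s ∧ s ≤ a) := by
    intro x hx
    rcases Finset.mem_filter.1 hx with ⟨h1, h2, h3⟩
    exact Finset.mem_filter.2 ⟨h1, h2, h3.trans hba⟩
  have key : S.filter (fun s => b < s ∧ s ≤ a)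
      = S.filter (fun s => 0 < s ∧ s ≤ a) \ S.filter (fun s => 0 < s ∧ s ≤ b) := by
    ext x
    simp only [Finset.mem_filter, Finset.mem_sdiff]
    constructor
    · rintro ⟨hx, h1, h2⟩
      refine ⟨⟨hx, lt_of_le_of_lt hb0 h1, h2⟩, ?_⟩
      rintro ⟨-, -, h3⟩; linarith
    · rintro ⟨⟨hx, h1, h2⟩, hn⟩
      refine ⟨hx, ?_, h2⟩
      by_contra h'
      push_neg at h'
      exact hn ⟨hx, h1, h'⟩
  rw [key, Finset.sum_sdiff_eq_sub hsub, sum_gaps h0 ha (hb0.trans hba), sum_gaps h0 hb hb0]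

lemma sum_gap_le {S : Finset ℝ} (h0 : (0:ℝ) ∈ S) {c : ℝ} (hc : c ∈ S) (hc0 : 0 ≤ c) (r : ℝ) :
    ∑ s ∈ S.filter (fun s => 0 < s), (s - predS S s) * (if s ≤ c then r else 0) = r * c := by
  simp only [mul_ite, mul_zero]
  rw [← Finset.sum_filter, Finset.filter_filter, ← Finset.sum_mul, sum_gaps h0 hc hc0, mul_comm]

lemma sum_gap_le_P {S : Finset ℝ} (h0 : (0:ℝ) ∈ S) {c : ℝ} (hc : c ∈ S) (hc0 : 0 ≤ c)
    (P : Prop) [Decidable P] (r : ℝ) :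
    ∑ s ∈ S.filter (fun s => 0 < s), (s - predS S s) * (if P ∧ s ≤ c then r else 0)
      = if P then r * c else 0 := by
  by_cases hP : P
  · simp only [hP, true_and, if_true]
    exact sum_gap_le h0 hc hc0 r
  · simp [hP]

lemma sum_gap_between {S : Finset ℝ} (h0 : (0:ℝ) ∈ S) {a b : ℝ} (ha : a ∈ S) (hb : b ∈ S)
    (hb0 : 0 ≤ b) (r : ℝ) :
    ∑ s ∈ S.filter (fun s => 0 < s), (s - predS S s) * (if b < s ∧ s ≤ a then r else 0)
      = if b < a then r * (a - b) else 0 := by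
  by_cases hba : b < a
  · rw [if_pos hba]
    simp only [mul_ite, mul_zero]
    rw [← Finset.sum_filter, Finset.filter_filter]
    have he : S.filter (fun s => 0 < s ∧ b < s ∧ s ≤ a) = S.filter (fun s => b < s ∧ s ≤ a) := by
      ext x
      simp only [Finset.mem_filter]
      constructor
      · rintro ⟨h1, -, h3⟩; exact ⟨h1, h3⟩
      · rintro ⟨h1, h2, h3⟩; exact ⟨h1, lt_of_le_of_lt hb0 h2, h2, h3⟩
    rw [he, ← Finset.sum_mul, sum_gaps_between h0 ha hb hb0 hba.le, mul_comm]
  · rw [if_neg hba]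
    refine Finset.sum_eq_zero fun s hs => ?_
    have hcond : ¬(b < s ∧ s ≤ a) := by
      push_neg at hba ⊢
      intro h1; linarith
    rw [if_neg hcond, mul_zero]



lemma key_ineq (A B : ℝ) :
    2 * (if A * B < 0 then min (A ^ 2) (B ^ 2) else 0) + |A ^ 2 - B ^ 2|
      ≤ |A - B| * (|A| + |B|) := by
  rcases lt_or_ge (A * B) 0 with h | h
  · rw [if_pos h]
    have h1 : |A - B| ≤ |A| + |B| := by
      calc |A - B| = |A + -B| := by rw [sub_eq_add_neg]
        _ ≤ |A| + |-B| := abs_add_le _ _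
        _ = |A| + |B| := by rw [abs_neg]
    have h2 : A ^ 2 + B ^ 2 ≤ |A - B| ^ 2 := by
      rw [sq_abs]; nlinarith
    have h3 : 2 * min (A ^ 2) (B ^ 2) + |A ^ 2 - B ^ 2| = A ^ 2 + B ^ 2 := by
      rcases le_total (A ^ 2) (B ^ 2) with hle | hle
      · rw [min_eq_left hle, abs_of_nonpos (by linarith)]; ring
      · rw [min_eq_right hle, abs_of_nonneg (by linarith)]; ring
    have h4 : |A - B| ^ 2 ≤ |A - B| * (|A| + |B|) := by
      have h5 := abs_nonneg (A - B)
      nlinarith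
    linarith
  · rw [if_neg (not_lt.2 h)]
    have h6 : |A ^ 2 - B ^ 2| = |A - B| * |A + B| := by
      rw [← abs_mul]; congr 1; ring
    calc 2 * 0 + |A ^ 2 - B ^ 2| = |A - B| * |A + B| := by rw [h6]; ring
      _ ≤ |A - B| * (|A| + |B|) := mul_le_mul_of_nonneg_left (abs_add_le _ _) (abs_nonneg _)

lemma E4 (a b : ℝ) :
    (if b ^ 2 < a ^ 2 then a ^ 2 - b ^ 2 else 0)
      + (if a ^ 2 < b ^ 2 then b ^ 2 - a ^ 2 else 0) = |a ^ 2 - b ^ 2| := by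
  rcases lt_trichotomy (a ^ 2) (b ^ 2) with h | h | h
  · rw [if_neg (by linarith), if_pos h, abs_of_neg (by linarith)]; ring
  · simp [h]
  · rw [if_pos h, if_neg (by linarith), abs_of_pos (by linarith)]; ring

lemma Eopp (a b m : ℝ) :
    (if 0 < a ∧ b < 0 then m else 0) + (if 0 < b ∧ a < 0 then m else 0)
      = if a * b < 0 then m else 0 := by
  by_cases h : a * b < 0
  · rcases mul_neg_iff.1 h with ⟨h1, h2⟩ | ⟨h1, h2⟩
    · rw [if_pos ⟨h1, h2⟩, if_neg (by rintro ⟨c1, c2⟩; linarith), if_pos h, add_zero]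
    · rw [if_neg (by rintro ⟨c1, c2⟩; linarith), if_pos ⟨h2, h1⟩, if_pos h, zero_add]
  · rw [if_neg h, if_neg (by rintro ⟨c1, c2⟩; exact h (mul_neg_of_pos_of_neg c1 c2)),
      if_neg (by rintro ⟨c1, c2⟩; exact h (mul_neg_of_neg_of_pos c2 c1)), add_zero]

lemma Esame (a b m : ℝ) :
    (if 0 < a ∧ 0 < b then m else 0) + (if a < 0 ∧ b < 0 then m else 0)
      = if 0 < a * b then m else 0 := by
  by_cases h : 0 < a * b
  · rcases mul_pos_iff.1 h with ⟨h1, h2⟩ | ⟨h1, h2⟩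
    · rw [if_pos ⟨h1, h2⟩, if_neg (by rintro ⟨c1, c2⟩; linarith), if_pos h, add_zero]
    · rw [if_neg (by rintro ⟨c1, c2⟩; linarith), if_pos ⟨h1, h2⟩, if_pos h, zero_add]
  · rw [if_neg h, if_neg (by rintro ⟨c1, c2⟩; exact h (mul_pos c1 c2)),
      if_neg (by rintro ⟨c1, c2⟩; exact h (mul_pos_of_neg_of_neg c1 c2)), add_zero]

lemma qq_le (a b σ : ℝ) (hσ : σ = 1 ∨ σ = -1) :
    2 * (if σ = 1 ∧ 0 < a ∧ b < 0 then min (a ^ 2) (b ^ 2) else 0)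
      + (if σ = -1 ∧ 0 < a ∧ 0 < b then min (a ^ 2) (b ^ 2) else 0)
      + (if σ = -1 ∧ a < 0 ∧ b < 0 then min (a ^ 2) (b ^ 2) else 0)
      + (if b ^ 2 < a ^ 2 then a ^ 2 - b ^ 2 else 0)
      + (2 * (if σ = 1 ∧ 0 < b ∧ a < 0 then min (b ^ 2) (a ^ 2) else 0)
        + (if σ = -1 ∧ 0 < b ∧ 0 < a then min (b ^ 2) (a ^ 2) else 0)
        + (if σ = -1 ∧ b < 0 ∧ a < 0 then min (b ^ 2) (a ^ 2) else 0)
        + (if a ^ 2 < b ^ 2 then b ^ 2 - a ^ 2 else 0))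
      ≤ |a - σ * b| * (|a| + |b|) := by
  have e4 := E4 a b
  rcases hσ with rfl | rfl
  · have hne : ¬((1:ℝ) = -1) := by norm_num
    simp only [hne, false_and, if_false, true_and, min_comm (b ^ 2) (a ^ 2), one_mul]
    have e1 := Eopp a b (min (a ^ 2) (b ^ 2))
    have key := key_ineq a b
    linarith
  · have hne : ¬((-1:ℝ) = 1) := by norm_num
    simp only [hne, false_and, if_false, true_and, min_comm (b ^ 2) (a ^ 2)]
    have hcomm : (if 0 < b ∧ 0 < a then min (a ^ 2) (b ^ 2) else 0)
        = if 0 < a ∧ 0 < b then min (a ^ 2) (b ^ 2) else 0 := if_congr and_comm rfl rfl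
    have hcomm' : (if b < 0 ∧ a < 0 then min (a ^ 2) (b ^ 2) else 0)
        = if a < 0 ∧ b < 0 then min (a ^ 2) (b ^ 2) else 0 := if_congr and_comm rfl rfl
    rw [hcomm, hcomm']
    have e1 := Esame a b (min (a ^ 2) (b ^ 2))
    have key := key_ineq a (-b)
    have hrw1 : a * -b < 0 ↔ 0 < a * b := by constructor <;> intro h <;> nlinarith
    rw [neg_sq] at key
    have hrw2 : |a - -b| = |a - (-1) * b| := by norm_num
    have hrw3 : |(-b)| = |b| := abs_neg b
    by_cases hab : 0 < a * b
    · rw [if_pos (hrw1.2 hab)] at key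
      rw [if_pos hab] at e1
      rw [hrw2, hrw3] at key
      linarith
    · rw [if_neg (fun hh => hab (hrw1.1 hh))] at key
      rw [if_neg hab] at e1
      rw [hrw2, hrw3] at key
      linarith

end SignedGraphAux

namespace SignedGraph
set_option maxHeartbeats 1000000

variable {N : ℕ}

/-- The degree `d(u) = Σ_v w(u,v)` of a vertex. -/
def deg (w : Fin N → Fin N → ℝ) (u : Fin N) : ℝ := ∑ v, w u v

/-- Hypotheses making `(w, sgn)` a weighted signed graph: `w` is a symmetric nonnegative
weight function vanishing on the diagonal and `sgn` is a symmetric `±1`-valued signature. -/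
structure IsWSG {N : ℕ} (w : Fin N → Fin N → ℝ) (sgn : Fin N → Fin N → ℝ) : Prop where
  w_symm : ∀ u v, w u v = w v u
  w_nonneg : ∀ u v, 0 ≤ w u v
  w_loopless : ∀ u, w u u = 0
  sgn_symm : ∀ u v, sgn u v = sgn v u
  sgn_pm : ∀ u v, sgn u v = 1 ∨ sgn u v = -1

/-- The signature obtained from `sgn` by switching with the function `θ : V → {±1}`. -/
def switchSgn (sgn : Fin N → Fin N → ℝ) (θ : Fin N → ℝ) : Fin N → Fin N → ℝ :=
  fun u v => θ u * sgn u v * θ v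

/-- `|E(S,T)| = Σ_{u∈S, v∈T} w(u,v)`. -/
def EE (w : Fin N → Fin N → ℝ) (S T : Finset (Fin N)) : ℝ := ∑ u ∈ S, ∑ v ∈ T, w u v

/-- `|E⁺(S,T)|`: total weight of positive edges from `S` to `T`. -/
def Epos (w sgn : Fin N → Fin N → ℝ) (S T : Finset (Fin N)) : ℝ :=
  ∑ u ∈ S, ∑ v ∈ T, if sgn u v = 1 then w u v else 0

/-- `|E⁻(S,T)|`: total weight of negative edges from `S` to `T`. -/
def Eneg (w sgn : Fin N → Fin N → ℝ) (S T : Finset (Fin N)) : ℝ :=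
  ∑ u ∈ S, ∑ v ∈ T, if sgn u v = -1 then w u v else 0

/-- `vol_μ(S) = Σ_{u∈S} μ(u)`. -/
def vol (μ : Fin N → ℝ) (S : Finset (Fin N)) : ℝ := ∑ u ∈ S, μ u

/-- The signed bipartiteness ratio `β^σ(V₁,V₂)`. -/
def betaR (w sgn : Fin N → Fin N → ℝ) (μ : Fin N → ℝ) (V1 V2 : Finset (Fin N)) : ℝ :=
  (2 * Epos w sgn V1 V2 + Eneg w sgn V1 V1 + Eneg w sgn V2 V2 +
      EE w (V1 ∪ V2) (V1 ∪ V2)ᶜ) / vol μ (V1 ∪ V2)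

/-- The signed Cheeger constant `h₁^σ(μ)`: the minimum of `β^σ(V₁,V₂)` over all pairs of
disjoint subsets with nonempty union. -/
def h1 (w sgn : Fin N → Fin N → ℝ) (μ : Fin N → ℝ) : ℝ :=
  sInf {x | ∃ V1 V2 : Finset (Fin N),
    Disjoint V1 V2 ∧ (V1 ∪ V2).Nonempty ∧ x = betaR w sgn μ V1 V2}

/-- The signed Rayleigh quotient `R^σ_μ(f)`. -/
def rayleigh (w sgn : Fin N → Fin N → ℝ) (μ : Fin N → ℝ) (f : Fin N → ℝ) : ℝ :=
  ((1 : ℝ) / 2 * ∑ u, ∑ v, w u v * (f u - sgn u v * f v) ^ 2) / (∑ u, μ u * f u ^ 2)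

/-- The upper threshold set `V_f(√t) = {u : f(u) ≥ √t}` (for `t = 0` this is `{u : f(u) ≥ 0}`). -/
def Vp (f : Fin N → ℝ) (t : ℝ) : Finset (Fin N) :=
  Finset.univ.filter (fun u => Real.sqrt t ≤ f u)

/-- The lower threshold set `V_f(−√t) = {u : f(u) ≤ −√t}` for `t > 0`, with the special
definition `V_f(−√0) = {u : f(u) < 0}`. -/
def Vm (f : Fin N → ℝ) (t : ℝ) : Finset (Fin N) :=
  if t = 0 then Finset.univ.filter (fun u => f u < 0)
  else Finset.univ.filter (fun u => f u ≤ -Real.sqrt t)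

/-- For any nonzero `f : V → ℝ` there is `t' ∈ [0, max_u f(u)²]` such that
the pair `(V_f(√t'), V_f(−√t'))` has nonempty union and
`β^σ(V_f(√t'), V_f(−√t')) ≤ √(2 d_μ^w R^σ_μ(f))`, where `d_μ^w = max_u d(u)/μ(u)`. -/
theorem basic_brick {N : ℕ} (hN : 0 < N) (w sgn : Fin N → Fin N → ℝ) (hG : IsWSG w sgn)
    (μ : Fin N → ℝ) (hμ : ∀ u, 0 < μ u) (f : Fin N → ℝ) (hf : f ≠ 0) :
    ∃ t' ∈ Set.Icc (0 : ℝ) (⨆ u, (f u) ^ 2),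
      (Vp f t' ∪ Vm f t').Nonempty ∧
      betaR w sgn μ (Vp f t') (Vm f t') ≤
        Real.sqrt (2 * (⨆ u, deg w u / μ u) * rayleigh w sgn μ f) := by
  classical
  have hNE : Nonempty (Fin N) := ⟨⟨0, hN⟩⟩
  obtain ⟨u₀, hu₀⟩ : ∃ u, f u ≠ 0 := by
    by_contra h; push_neg at h; exact hf (funext h)
  have hfu₀ : 0 < f u₀ ^ 2 := lt_of_le_of_ne (sq_nonneg _) (Ne.symm (pow_ne_zero 2 hu₀))
  set M : ℝ := ∑ u, μ u * f u ^ 2 with hMdef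
  have hM : 0 < M := Finset.sum_pos' (fun u _ => mul_nonneg (hμ u).le (sq_nonneg _))
    ⟨u₀, Finset.mem_univ _, mul_pos (hμ u₀) hfu₀⟩
  set Rq : ℝ := rayleigh w sgn μ f with hRqdef
  set dm : ℝ := ⨆ u, deg w u / μ u with hdmdef
  have hMne : M ≠ 0 := ne_of_gt hM
  have hnum : ∑ u, ∑ v, w u v * (f u - sgn u v * f v) ^ 2 = 2 * Rq * M := by
    have h1 : Rq = (1 / 2 * ∑ u, ∑ v, w u v * (f u - sgn u v * f v) ^ 2) / M := by
      rw [hRqdef, rayleigh, ← hMdef]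
    rw [h1]; field_simp
  have hnum0 : 0 ≤ ∑ u, ∑ v, w u v * (f u - sgn u v * f v) ^ 2 :=
    Finset.sum_nonneg fun u _ => Finset.sum_nonneg fun v _ =>
      mul_nonneg (hG.w_nonneg u v) (sq_nonneg _)
  have hRq0 : 0 ≤ Rq := by
    by_contra hneg
    push_neg at hneg
    nlinarith [hnum0.trans_eq hnum, mul_pos hM (neg_pos.2 hneg)]
  have hbdd : BddAbove (Set.range fun u => deg w u / μ u) :=
    Set.Finite.bddAbove (Set.finite_range _)
  have hdeg0 : ∀ u, 0 ≤ deg w u := fun u =>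
    Finset.sum_nonneg fun v _ => hG.w_nonneg u v
  have hdm_le : ∀ u, deg w u ≤ dm * μ u := by
    intro u
    have h1 : deg w u / μ u ≤ dm := le_ciSup hbdd u
    have h2 := mul_le_mul_of_nonneg_right h1 (hμ u).le
    rwa [div_mul_cancel₀ _ (ne_of_gt (hμ u))] at h2
  have hdm0 : 0 ≤ dm :=
    le_trans (div_nonneg (hdeg0 u₀) (hμ u₀).le) (le_ciSup hbdd u₀)
  -- thresholds
  set S : Finset ℝ := insert (0:ℝ) (Finset.univ.image fun u => f u ^ 2) with hSdef
  have h0S : (0:ℝ) ∈ S := Finset.mem_insert_self _ _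
  have hfS : ∀ u, f u ^ 2 ∈ S := fun u =>
    Finset.mem_insert_of_mem (Finset.mem_image_of_mem _ (Finset.mem_univ u))
  have hSpne : (S.filter fun s => 0 < s).Nonempty :=
    ⟨f u₀ ^ 2, Finset.mem_filter.2 ⟨hfS u₀, hfu₀⟩⟩
  -- membership characterizations
  have hVp : ∀ s : ℝ, 0 < s → ∀ u, (u ∈ Vp f s ↔ 0 < f u ∧ s ≤ f u ^ 2) := by
    intro s hs u
    simp only [Vp, Finset.mem_filter, Finset.mem_univ, true_and]
    constructor
    · intro h
      have h1 : 0 < Real.sqrt s := Real.sqrt_pos.2 hs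
      have h2 : Real.sqrt s ^ 2 ≤ f u ^ 2 := pow_le_pow_left₀ h1.le h 2
      rw [Real.sq_sqrt hs.le] at h2
      exact ⟨lt_of_lt_of_le h1 h, h2⟩
    · rintro ⟨h1, h2⟩
      have h3 := Real.sqrt_le_sqrt h2
      rwa [Real.sqrt_sq h1.le] at h3
  have hVm : ∀ s : ℝ, 0 < s → ∀ u, (u ∈ Vm f s ↔ f u < 0 ∧ s ≤ f u ^ 2) := by
    intro s hs u
    rw [Vm, if_neg hs.ne']
    simp only [Finset.mem_filter, Finset.mem_univ, true_and]
    constructor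
    · intro h
      have h1 : 0 < Real.sqrt s := Real.sqrt_pos.2 hs
      have h2 : Real.sqrt s ≤ -f u := by linarith
      have h3 : Real.sqrt s ^ 2 ≤ (-f u) ^ 2 := pow_le_pow_left₀ h1.le h2 2
      rw [Real.sq_sqrt hs.le, neg_sq] at h3
      exact ⟨by linarith, h3⟩
    · rintro ⟨h1, h2⟩
      have h3 := Real.sqrt_le_sqrt h2
      rw [Real.sqrt_sq_eq_abs, abs_of_neg h1] at h3
      linarith
  have hU : ∀ s : ℝ, 0 < s → ∀ u, (u ∈ Vp f s ∪ Vm f s ↔ s ≤ f u ^ 2) := by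
    intro s hs u
    rw [Finset.mem_union, hVp s hs u, hVm s hs u]
    constructor
    · rintro (⟨-, h⟩ | ⟨-, h⟩) <;> exact h
    · intro h
      rcases lt_trichotomy (f u) 0 with h1 | h1 | h1
      · exact Or.inr ⟨h1, h⟩
      · exfalso; rw [h1] at h; norm_num at h; linarith
      · exact Or.inl ⟨h1, h⟩
  -- sum expansion helpers
  have expand1 : ∀ (T : Finset (Fin N)) (g : Fin N → ℝ),
      (∑ x ∈ T, g x) = ∑ x, if x ∈ T then g x else 0 := by
    intro T g
    rw [Finset.sum_ite_mem, Finset.univ_inter]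
  have expand2 : ∀ (V₁ V₂ : Finset (Fin N)) (F : Fin N → Fin N → ℝ),
      (∑ u ∈ V₁, ∑ v ∈ V₂, F u v)
        = ∑ u, ∑ v, if u ∈ V₁ ∧ v ∈ V₂ then F u v else 0 := by
    intro V₁ V₂ F
    rw [expand1 V₁ _]
    refine Finset.sum_congr rfl fun u _ => ?_
    by_cases h : u ∈ V₁
    · simp only [h, if_true, true_and]
      exact expand1 V₂ _
    · simp [h]
  -- indicator forms of the four numerator pieces
  have he1 : ∀ s : ℝ, 0 < s → Epos w sgn (Vp f s) (Vm f s)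
      = ∑ u, ∑ v, (if (sgn u v = 1 ∧ 0 < f u ∧ f v < 0) ∧ s ≤ min (f u ^ 2) (f v ^ 2)
          then w u v else 0) := by
    intro s hs
    rw [Epos, expand2]
    refine Finset.sum_congr rfl fun u _ => Finset.sum_congr rfl fun v _ => ?_
    by_cases hσ : sgn u v = 1
    · rw [if_pos hσ]
      refine if_congr ?_ rfl rfl
      rw [hVp s hs u, hVm s hs v]
      constructor
      · rintro ⟨⟨h1, h2⟩, h3, h4⟩; exact ⟨⟨hσ, h1, h3⟩, le_min h2 h4⟩
      · rintro ⟨⟨-, h1, h3⟩, h24⟩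
        exact ⟨⟨h1, (le_min_iff.1 h24).1⟩, h3, (le_min_iff.1 h24).2⟩
    · simp [hσ]
  have he2 : ∀ s : ℝ, 0 < s → Eneg w sgn (Vp f s) (Vp f s)
      = ∑ u, ∑ v, (if (sgn u v = -1 ∧ 0 < f u ∧ 0 < f v) ∧ s ≤ min (f u ^ 2) (f v ^ 2)
          then w u v else 0) := by
    intro s hs
    rw [Eneg, expand2]
    refine Finset.sum_congr rfl fun u _ => Finset.sum_congr rfl fun v _ => ?_
    by_cases hσ : sgn u v = -1
    · rw [if_pos hσ]
      refine if_congr ?_ rfl rfl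
      rw [hVp s hs u, hVp s hs v]
      constructor
      · rintro ⟨⟨h1, h2⟩, h3, h4⟩; exact ⟨⟨hσ, h1, h3⟩, le_min h2 h4⟩
      · rintro ⟨⟨-, h1, h3⟩, h24⟩
        exact ⟨⟨h1, (le_min_iff.1 h24).1⟩, h3, (le_min_iff.1 h24).2⟩
    · simp [hσ]
  have he3 : ∀ s : ℝ, 0 < s → Eneg w sgn (Vm f s) (Vm f s)
      = ∑ u, ∑ v, (if (sgn u v = -1 ∧ f u < 0 ∧ f v < 0) ∧ s ≤ min (f u ^ 2) (f v ^ 2)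
          then w u v else 0) := by
    intro s hs
    rw [Eneg, expand2]
    refine Finset.sum_congr rfl fun u _ => Finset.sum_congr rfl fun v _ => ?_
    by_cases hσ : sgn u v = -1
    · rw [if_pos hσ]
      refine if_congr ?_ rfl rfl
      rw [hVm s hs u, hVm s hs v]
      constructor
      · rintro ⟨⟨h1, h2⟩, h3, h4⟩; exact ⟨⟨hσ, h1, h3⟩, le_min h2 h4⟩
      · rintro ⟨⟨-, h1, h3⟩, h24⟩
        exact ⟨⟨h1, (le_min_iff.1 h24).1⟩, h3, (le_min_iff.1 h24).2⟩
    · simp [hσ]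
  have he4 : ∀ s : ℝ, 0 < s → EE w (Vp f s ∪ Vm f s) (Vp f s ∪ Vm f s)ᶜ
      = ∑ u, ∑ v, (if f v ^ 2 < s ∧ s ≤ f u ^ 2 then w u v else 0) := by
    intro s hs
    rw [EE, expand2]
    refine Finset.sum_congr rfl fun u _ => Finset.sum_congr rfl fun v _ => ?_
    refine if_congr ?_ rfl rfl
    rw [Finset.mem_compl, hU s hs u, hU s hs v]
    constructor
    · rintro ⟨h1, h2⟩; exact ⟨not_le.1 h2, h1⟩
    · rintro ⟨h1, h2⟩; exact ⟨h2, not_le.2 h1⟩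
  -- summed closed forms
  have hA1 : ∑ s ∈ S.filter (fun s => 0 < s), (s - SignedGraphAux.predS S s)
        * Epos w sgn (Vp f s) (Vm f s)
      = ∑ u, ∑ v, (if sgn u v = 1 ∧ 0 < f u ∧ f v < 0
          then w u v * min (f u ^ 2) (f v ^ 2) else 0) := by
    calc ∑ s ∈ S.filter (fun s => 0 < s), (s - SignedGraphAux.predS S s)
            * Epos w sgn (Vp f s) (Vm f s)
        = ∑ s ∈ S.filter (fun s => 0 < s), ∑ u, ∑ v, (s - SignedGraphAux.predS S s)
            * (if (sgn u v = 1 ∧ 0 < f u ∧ f v < 0) ∧ s ≤ min (f u ^ 2) (f v ^ 2)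
              then w u v else 0) := by
          refine Finset.sum_congr rfl fun s hs => ?_
          rw [he1 s (Finset.mem_filter.1 hs).2, Finset.mul_sum]
          exact Finset.sum_congr rfl fun u _ => Finset.mul_sum _ _ _
      _ = ∑ u, ∑ v, ∑ s ∈ S.filter (fun s => 0 < s), (s - SignedGraphAux.predS S s)
            * (if (sgn u v = 1 ∧ 0 < f u ∧ f v < 0) ∧ s ≤ min (f u ^ 2) (f v ^ 2)
              then w u v else 0) := by
          rw [Finset.sum_comm]
          exact Finset.sum_congr rfl fun u _ => Finset.sum_comm
      _ = ∑ u, ∑ v, (if sgn u v = 1 ∧ 0 < f u ∧ f v < 0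
            then w u v * min (f u ^ 2) (f v ^ 2) else 0) := by
          refine Finset.sum_congr rfl fun u _ => Finset.sum_congr rfl fun v _ => ?_
          have hminS : min (f u ^ 2) (f v ^ 2) ∈ S := by
            rcases min_choice (f u ^ 2) (f v ^ 2) with h | h <;> rw [h] <;> exact hfS _
          exact SignedGraphAux.sum_gap_le_P h0S hminS
            (le_min (sq_nonneg _) (sq_nonneg _)) _ _
  have hA2 : ∑ s ∈ S.filter (fun s => 0 < s), (s - SignedGraphAux.predS S s)
        * Eneg w sgn (Vp f s) (Vp f s)
      = ∑ u, ∑ v, (if sgn u v = -1 ∧ 0 < f u ∧ 0 < f v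
          then w u v * min (f u ^ 2) (f v ^ 2) else 0) := by
    calc ∑ s ∈ S.filter (fun s => 0 < s), (s - SignedGraphAux.predS S s)
            * Eneg w sgn (Vp f s) (Vp f s)
        = ∑ s ∈ S.filter (fun s => 0 < s), ∑ u, ∑ v, (s - SignedGraphAux.predS S s)
            * (if (sgn u v = -1 ∧ 0 < f u ∧ 0 < f v) ∧ s ≤ min (f u ^ 2) (f v ^ 2)
              then w u v else 0) := by
          refine Finset.sum_congr rfl fun s hs => ?_
          rw [he2 s (Finset.mem_filter.1 hs).2, Finset.mul_sum]
          exact Finset.sum_congr rfl fun u _ => Finset.mul_sum _ _ _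
      _ = ∑ u, ∑ v, ∑ s ∈ S.filter (fun s => 0 < s), (s - SignedGraphAux.predS S s)
            * (if (sgn u v = -1 ∧ 0 < f u ∧ 0 < f v) ∧ s ≤ min (f u ^ 2) (f v ^ 2)
              then w u v else 0) := by
          rw [Finset.sum_comm]
          exact Finset.sum_congr rfl fun u _ => Finset.sum_comm
      _ = ∑ u, ∑ v, (if sgn u v = -1 ∧ 0 < f u ∧ 0 < f v
            then w u v * min (f u ^ 2) (f v ^ 2) else 0) := by
          refine Finset.sum_congr rfl fun u _ => Finset.sum_congr rfl fun v _ => ?_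
          have hminS : min (f u ^ 2) (f v ^ 2) ∈ S := by
            rcases min_choice (f u ^ 2) (f v ^ 2) with h | h <;> rw [h] <;> exact hfS _
          exact SignedGraphAux.sum_gap_le_P h0S hminS
            (le_min (sq_nonneg _) (sq_nonneg _)) _ _
  have hA3 : ∑ s ∈ S.filter (fun s => 0 < s), (s - SignedGraphAux.predS S s)
        * Eneg w sgn (Vm f s) (Vm f s)
      = ∑ u, ∑ v, (if sgn u v = -1 ∧ f u < 0 ∧ f v < 0
          then w u v * min (f u ^ 2) (f v ^ 2) else 0) := by
    calc ∑ s ∈ S.filter (fun s => 0 < s), (s - SignedGraphAux.predS S s)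
            * Eneg w sgn (Vm f s) (Vm f s)
        = ∑ s ∈ S.filter (fun s => 0 < s), ∑ u, ∑ v, (s - SignedGraphAux.predS S s)
            * (if (sgn u v = -1 ∧ f u < 0 ∧ f v < 0) ∧ s ≤ min (f u ^ 2) (f v ^ 2)
              then w u v else 0) := by
          refine Finset.sum_congr rfl fun s hs => ?_
          rw [he3 s (Finset.mem_filter.1 hs).2, Finset.mul_sum]
          exact Finset.sum_congr rfl fun u _ => Finset.mul_sum _ _ _
      _ = ∑ u, ∑ v, ∑ s ∈ S.filter (fun s => 0 < s), (s - SignedGraphAux.predS S s)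
            * (if (sgn u v = -1 ∧ f u < 0 ∧ f v < 0) ∧ s ≤ min (f u ^ 2) (f v ^ 2)
              then w u v else 0) := by
          rw [Finset.sum_comm]
          exact Finset.sum_congr rfl fun u _ => Finset.sum_comm
      _ = ∑ u, ∑ v, (if sgn u v = -1 ∧ f u < 0 ∧ f v < 0
            then w u v * min (f u ^ 2) (f v ^ 2) else 0) := by
          refine Finset.sum_congr rfl fun u _ => Finset.sum_congr rfl fun v _ => ?_
          have hminS : min (f u ^ 2) (f v ^ 2) ∈ S := by
            rcases min_choice (f u ^ 2) (f v ^ 2) with h | h <;> rw [h] <;> exact hfS _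
          exact SignedGraphAux.sum_gap_le_P h0S hminS
            (le_min (sq_nonneg _) (sq_nonneg _)) _ _
  have hA4 : ∑ s ∈ S.filter (fun s => 0 < s), (s - SignedGraphAux.predS S s)
        * EE w (Vp f s ∪ Vm f s) (Vp f s ∪ Vm f s)ᶜ
      = ∑ u, ∑ v, (if f v ^ 2 < f u ^ 2
          then w u v * (f u ^ 2 - f v ^ 2) else 0) := by
    calc ∑ s ∈ S.filter (fun s => 0 < s), (s - SignedGraphAux.predS S s)
            * EE w (Vp f s ∪ Vm f s) (Vp f s ∪ Vm f s)ᶜ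
        = ∑ s ∈ S.filter (fun s => 0 < s), ∑ u, ∑ v, (s - SignedGraphAux.predS S s)
            * (if f v ^ 2 < s ∧ s ≤ f u ^ 2 then w u v else 0) := by
          refine Finset.sum_congr rfl fun s hs => ?_
          rw [he4 s (Finset.mem_filter.1 hs).2, Finset.mul_sum]
          exact Finset.sum_congr rfl fun u _ => Finset.mul_sum _ _ _
      _ = ∑ u, ∑ v, ∑ s ∈ S.filter (fun s => 0 < s), (s - SignedGraphAux.predS S s)
            * (if f v ^ 2 < s ∧ s ≤ f u ^ 2 then w u v else 0) := by
          rw [Finset.sum_comm]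
          exact Finset.sum_congr rfl fun u _ => Finset.sum_comm
      _ = ∑ u, ∑ v, (if f v ^ 2 < f u ^ 2 then w u v * (f u ^ 2 - f v ^ 2) else 0) := by
          refine Finset.sum_congr rfl fun u _ => Finset.sum_congr rfl fun v _ => ?_
          exact SignedGraphAux.sum_gap_between h0S (hfS u) (hfS v) (sq_nonneg _) _
  have hD : ∑ s ∈ S.filter (fun s => 0 < s), (s - SignedGraphAux.predS S s)
        * vol μ (Vp f s ∪ Vm f s) = M := by
    calc ∑ s ∈ S.filter (fun s => 0 < s), (s - SignedGraphAux.predS S s)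
            * vol μ (Vp f s ∪ Vm f s)
        = ∑ s ∈ S.filter (fun s => 0 < s), ∑ u, (s - SignedGraphAux.predS S s)
            * (if s ≤ f u ^ 2 then μ u else 0) := by
          refine Finset.sum_congr rfl fun s hs => ?_
          have hs0 : 0 < s := (Finset.mem_filter.1 hs).2
          rw [vol, expand1, Finset.mul_sum]
          refine Finset.sum_congr rfl fun u _ => ?_
          congr 1
          exact if_congr (hU s hs0 u) rfl rfl
      _ = ∑ u, ∑ s ∈ S.filter (fun s => 0 < s), (s - SignedGraphAux.predS S s)
            * (if s ≤ f u ^ 2 then μ u else 0) := Finset.sum_comm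
      _ = ∑ u, μ u * f u ^ 2 := by
          refine Finset.sum_congr rfl fun u _ => ?_
          exact SignedGraphAux.sum_gap_le h0S (hfS u) (sq_nonneg _) _
      _ = M := hMdef.symm
  -- the total numerator sum
  have hNsum : ∑ s ∈ S.filter (fun s => 0 < s), (s - SignedGraphAux.predS S s)
        * (2 * Epos w sgn (Vp f s) (Vm f s) + Eneg w sgn (Vp f s) (Vp f s)
          + Eneg w sgn (Vm f s) (Vm f s) + EE w (Vp f s ∪ Vm f s) (Vp f s ∪ Vm f s)ᶜ)
      = 2 * (∑ u, ∑ v, (if sgn u v = 1 ∧ 0 < f u ∧ f v < 0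
            then w u v * min (f u ^ 2) (f v ^ 2) else 0))
        + (∑ u, ∑ v, (if sgn u v = -1 ∧ 0 < f u ∧ 0 < f v
            then w u v * min (f u ^ 2) (f v ^ 2) else 0))
        + (∑ u, ∑ v, (if sgn u v = -1 ∧ f u < 0 ∧ f v < 0
            then w u v * min (f u ^ 2) (f v ^ 2) else 0))
        + (∑ u, ∑ v, (if f v ^ 2 < f u ^ 2 then w u v * (f u ^ 2 - f v ^ 2) else 0)) := by
    rw [← hA1, ← hA2, ← hA3, ← hA4]
    rw [Finset.mul_sum, ← Finset.sum_add_distrib, ← Finset.sum_add_distrib,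
      ← Finset.sum_add_distrib]
    refine Finset.sum_congr rfl fun s _ => ?_
    ring
  -- symmetrization and the pointwise bound
  have hkey : ∀ u v,
      ((if sgn u v = 1 ∧ 0 < f u ∧ f v < 0
          then w u v * min (f u ^ 2) (f v ^ 2) else 0) * 2
        + (if sgn u v = -1 ∧ 0 < f u ∧ 0 < f v
          then w u v * min (f u ^ 2) (f v ^ 2) else 0)
        + (if sgn u v = -1 ∧ f u < 0 ∧ f v < 0
          then w u v * min (f u ^ 2) (f v ^ 2) else 0)
        + (if f v ^ 2 < f u ^ 2 then w u v * (f u ^ 2 - f v ^ 2) else 0))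
      + ((if sgn v u = 1 ∧ 0 < f v ∧ f u < 0
          then w v u * min (f v ^ 2) (f u ^ 2) else 0) * 2
        + (if sgn v u = -1 ∧ 0 < f v ∧ 0 < f u
          then w v u * min (f v ^ 2) (f u ^ 2) else 0)
        + (if sgn v u = -1 ∧ f v < 0 ∧ f u < 0
          then w v u * min (f v ^ 2) (f u ^ 2) else 0)
        + (if f u ^ 2 < f v ^ 2 then w v u * (f v ^ 2 - f u ^ 2) else 0))
      ≤ w u v * (|f u - sgn u v * f v| * (|f u| + |f v|)) := by
    intro u v
    rw [hG.w_symm v u, hG.sgn_symm v u]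
    have hw : ∀ (P : Prop) [Decidable P] (x : ℝ),
        (if P then w u v * x else 0) = w u v * (if P then x else 0) := by
      intro P _ x
      split_ifs <;> simp
    rw [hw, hw, hw, hw, hw, hw, hw, hw]
    calc w u v * (if sgn u v = 1 ∧ 0 < f u ∧ f v < 0 then min (f u ^ 2) (f v ^ 2) else 0) * 2
          + w u v * (if sgn u v = -1 ∧ 0 < f u ∧ 0 < f v then min (f u ^ 2) (f v ^ 2) else 0)
          + w u v * (if sgn u v = -1 ∧ f u < 0 ∧ f v < 0 then min (f u ^ 2) (f v ^ 2) else 0)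
          + w u v * (if f v ^ 2 < f u ^ 2 then f u ^ 2 - f v ^ 2 else 0)
          + (w u v * (if sgn u v = 1 ∧ 0 < f v ∧ f u < 0 then min (f v ^ 2) (f u ^ 2) else 0) * 2
            + w u v * (if sgn u v = -1 ∧ 0 < f v ∧ 0 < f u then min (f v ^ 2) (f u ^ 2) else 0)
            + w u v * (if sgn u v = -1 ∧ f v < 0 ∧ f u < 0 then min (f v ^ 2) (f u ^ 2) else 0)
            + w u v * (if f u ^ 2 < f v ^ 2 then f v ^ 2 - f u ^ 2 else 0))
        = w u v * (2 * (if sgn u v = 1 ∧ 0 < f u ∧ f v < 0 then min (f u ^ 2) (f v ^ 2) else 0)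
            + (if sgn u v = -1 ∧ 0 < f u ∧ 0 < f v then min (f u ^ 2) (f v ^ 2) else 0)
            + (if sgn u v = -1 ∧ f u < 0 ∧ f v < 0 then min (f u ^ 2) (f v ^ 2) else 0)
            + (if f v ^ 2 < f u ^ 2 then f u ^ 2 - f v ^ 2 else 0)
            + (2 * (if sgn u v = 1 ∧ 0 < f v ∧ f u < 0 then min (f v ^ 2) (f u ^ 2) else 0)
              + (if sgn u v = -1 ∧ 0 < f v ∧ 0 < f u then min (f v ^ 2) (f u ^ 2) else 0)
              + (if sgn u v = -1 ∧ f v < 0 ∧ f u < 0 then min (f v ^ 2) (f u ^ 2) else 0)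
              + (if f u ^ 2 < f v ^ 2 then f v ^ 2 - f u ^ 2 else 0))) := by ring
      _ ≤ w u v * (|f u - sgn u v * f v| * (|f u| + |f v|)) :=
          mul_le_mul_of_nonneg_left
            (SignedGraphAux.qq_le (f u) (f v) (sgn u v) (hG.sgn_pm u v)) (hG.w_nonneg u v)
  have hsym : 2 * (∑ u, ∑ v, (if sgn u v = 1 ∧ 0 < f u ∧ f v < 0
            then w u v * min (f u ^ 2) (f v ^ 2) else 0))
        + (∑ u, ∑ v, (if sgn u v = -1 ∧ 0 < f u ∧ 0 < f v
            then w u v * min (f u ^ 2) (f v ^ 2) else 0))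
        + (∑ u, ∑ v, (if sgn u v = -1 ∧ f u < 0 ∧ f v < 0
            then w u v * min (f u ^ 2) (f v ^ 2) else 0))
        + (∑ u, ∑ v, (if f v ^ 2 < f u ^ 2 then w u v * (f u ^ 2 - f v ^ 2) else 0))
      ≤ 1 / 2 * ∑ u, ∑ v, w u v * (|f u - sgn u v * f v| * (|f u| + |f v|)) := by
    have hsum_le : ∑ u, ∑ v,
        (((if sgn u v = 1 ∧ 0 < f u ∧ f v < 0
            then w u v * min (f u ^ 2) (f v ^ 2) else 0) * 2
          + (if sgn u v = -1 ∧ 0 < f u ∧ 0 < f v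
            then w u v * min (f u ^ 2) (f v ^ 2) else 0)
          + (if sgn u v = -1 ∧ f u < 0 ∧ f v < 0
            then w u v * min (f u ^ 2) (f v ^ 2) else 0)
          + (if f v ^ 2 < f u ^ 2 then w u v * (f u ^ 2 - f v ^ 2) else 0))
        + ((if sgn v u = 1 ∧ 0 < f v ∧ f u < 0
            then w v u * min (f v ^ 2) (f u ^ 2) else 0) * 2
          + (if sgn v u = -1 ∧ 0 < f v ∧ 0 < f u
            then w v u * min (f v ^ 2) (f u ^ 2) else 0)
          + (if sgn v u = -1 ∧ f v < 0 ∧ f u < 0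
            then w v u * min (f v ^ 2) (f u ^ 2) else 0)
          + (if f u ^ 2 < f v ^ 2 then w v u * (f v ^ 2 - f u ^ 2) else 0)))
        ≤ ∑ u, ∑ v, w u v * (|f u - sgn u v * f v| * (|f u| + |f v|)) :=
      Finset.sum_le_sum fun u _ => Finset.sum_le_sum fun v _ => hkey u v
    have hsplit : ∑ u, ∑ v,
        (((if sgn u v = 1 ∧ 0 < f u ∧ f v < 0
            then w u v * min (f u ^ 2) (f v ^ 2) else 0) * 2
          + (if sgn u v = -1 ∧ 0 < f u ∧ 0 < f v
            then w u v * min (f u ^ 2) (f v ^ 2) else 0)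
          + (if sgn u v = -1 ∧ f u < 0 ∧ f v < 0
            then w u v * min (f u ^ 2) (f v ^ 2) else 0)
          + (if f v ^ 2 < f u ^ 2 then w u v * (f u ^ 2 - f v ^ 2) else 0))
        + ((if sgn v u = 1 ∧ 0 < f v ∧ f u < 0
            then w v u * min (f v ^ 2) (f u ^ 2) else 0) * 2
          + (if sgn v u = -1 ∧ 0 < f v ∧ 0 < f u
            then w v u * min (f v ^ 2) (f u ^ 2) else 0)
          + (if sgn v u = -1 ∧ f v < 0 ∧ f u < 0
            then w v u * min (f v ^ 2) (f u ^ 2) else 0)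
          + (if f u ^ 2 < f v ^ 2 then w v u * (f v ^ 2 - f u ^ 2) else 0)))
        = 2 * (2 * (∑ u, ∑ v, (if sgn u v = 1 ∧ 0 < f u ∧ f v < 0
              then w u v * min (f u ^ 2) (f v ^ 2) else 0))
          + (∑ u, ∑ v, (if sgn u v = -1 ∧ 0 < f u ∧ 0 < f v
              then w u v * min (f u ^ 2) (f v ^ 2) else 0))
          + (∑ u, ∑ v, (if sgn u v = -1 ∧ f u < 0 ∧ f v < 0
              then w u v * min (f u ^ 2) (f v ^ 2) else 0))
          + (∑ u, ∑ v, (if f v ^ 2 < f u ^ 2 then w u v * (f u ^ 2 - f v ^ 2) else 0))) := by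
      simp only [Finset.sum_add_distrib]
      rw [show (∑ u, ∑ v, (if sgn v u = 1 ∧ 0 < f v ∧ f u < 0
            then w v u * min (f v ^ 2) (f u ^ 2) else 0) * 2)
          = ∑ u, ∑ v, (if sgn u v = 1 ∧ 0 < f u ∧ f v < 0
            then w u v * min (f u ^ 2) (f v ^ 2) else 0) * 2 from Finset.sum_comm]
      rw [show (∑ u, ∑ v, (if sgn v u = -1 ∧ 0 < f v ∧ 0 < f u
            then w v u * min (f v ^ 2) (f u ^ 2) else 0))
          = ∑ u, ∑ v, (if sgn u v = -1 ∧ 0 < f u ∧ 0 < f v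
            then w u v * min (f u ^ 2) (f v ^ 2) else 0) from Finset.sum_comm]
      rw [show (∑ u, ∑ v, (if sgn v u = -1 ∧ f v < 0 ∧ f u < 0
            then w v u * min (f v ^ 2) (f u ^ 2) else 0))
          = ∑ u, ∑ v, (if sgn u v = -1 ∧ f u < 0 ∧ f v < 0
            then w u v * min (f u ^ 2) (f v ^ 2) else 0) from Finset.sum_comm]
      rw [show (∑ u, ∑ v, (if f u ^ 2 < f v ^ 2 then w v u * (f v ^ 2 - f u ^ 2) else 0))
          = ∑ u, ∑ v, (if f v ^ 2 < f u ^ 2 then w u v * (f u ^ 2 - f v ^ 2) else 0)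
          from Finset.sum_comm]
      simp only [← Finset.sum_mul]
      ring
    linarith [hsplit ▸ hsum_le]
  -- Cauchy–Schwarz
  have hCS : ∑ u, ∑ v, w u v * (|f u - sgn u v * f v| * (|f u| + |f v|))
      ≤ Real.sqrt (2 * Rq * M) * Real.sqrt (4 * (dm * M)) := by
    have h1 : ∑ u, ∑ v, w u v * (|f u - sgn u v * f v| * (|f u| + |f v|))
        = ∑ p : Fin N × Fin N, (Real.sqrt (w p.1 p.2) * |f p.1 - sgn p.1 p.2 * f p.2|)
            * (Real.sqrt (w p.1 p.2) * (|f p.1| + |f p.2|)) := by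
      rw [Fintype.sum_prod_type]
      refine Finset.sum_congr rfl fun u _ => Finset.sum_congr rfl fun v _ => ?_
      have e : ∀ x y : ℝ, (Real.sqrt (w u v) * x) * (Real.sqrt (w u v) * y)
          = w u v * (x * y) := by
        intro x y
        calc (Real.sqrt (w u v) * x) * (Real.sqrt (w u v) * y)
            = (Real.sqrt (w u v) * Real.sqrt (w u v)) * (x * y) := by ring
          _ = w u v * (x * y) := by rw [Real.mul_self_sqrt (hG.w_nonneg u v)]
      exact (e _ _).symm
    have h2 := Real.sum_mul_le_sqrt_mul_sqrt Finset.univ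
      (fun p : Fin N × Fin N => Real.sqrt (w p.1 p.2) * |f p.1 - sgn p.1 p.2 * f p.2|)
      (fun p : Fin N × Fin N => Real.sqrt (w p.1 p.2) * (|f p.1| + |f p.2|))
    have h3 : ∑ p : Fin N × Fin N,
        (Real.sqrt (w p.1 p.2) * |f p.1 - sgn p.1 p.2 * f p.2|) ^ 2 = 2 * Rq * M := by
      rw [Fintype.sum_prod_type, ← hnum]
      refine Finset.sum_congr rfl fun u _ => Finset.sum_congr rfl fun v _ => ?_
      rw [mul_pow, Real.sq_sqrt (hG.w_nonneg u v), sq_abs]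
    have h4 : ∑ p : Fin N × Fin N,
        (Real.sqrt (w p.1 p.2) * (|f p.1| + |f p.2|)) ^ 2 ≤ 4 * (dm * M) := by
      have h5 : ∑ p : Fin N × Fin N, (Real.sqrt (w p.1 p.2) * (|f p.1| + |f p.2|)) ^ 2
          = ∑ u, ∑ v, w u v * (|f u| + |f v|) ^ 2 := by
        rw [Fintype.sum_prod_type]
        refine Finset.sum_congr rfl fun u _ => Finset.sum_congr rfl fun v _ => ?_
        rw [mul_pow, Real.sq_sqrt (hG.w_nonneg u v)]
      have h6 : ∑ u, ∑ v, w u v * (|f u| + |f v|) ^ 2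
          ≤ ∑ u, ∑ v, w u v * (2 * f u ^ 2 + 2 * f v ^ 2) := by
        refine Finset.sum_le_sum fun u _ => Finset.sum_le_sum fun v _ => ?_
        refine mul_le_mul_of_nonneg_left ?_ (hG.w_nonneg u v)
        nlinarith [sq_abs (f u), sq_abs (f v), sq_nonneg (|f u| - |f v|),
          abs_nonneg (f u), abs_nonneg (f v)]
      have h7 : ∑ u, ∑ v, w u v * (2 * f u ^ 2 + 2 * f v ^ 2)
          = 4 * ∑ u, deg w u * f u ^ 2 := by
        have t1 : ∑ u, ∑ v, w u v * (2 * f u ^ 2) = 2 * ∑ u, deg w u * f u ^ 2 := by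
          rw [Finset.mul_sum]
          refine Finset.sum_congr rfl fun u _ => ?_
          rw [← Finset.sum_mul, deg]
          ring
        have t2 : ∑ u, ∑ v, w u v * (2 * f v ^ 2) = 2 * ∑ u, deg w u * f u ^ 2 := by
          rw [Finset.sum_comm, Finset.mul_sum]
          refine Finset.sum_congr rfl fun v _ => ?_
          rw [← Finset.sum_mul]
          have : ∑ u, w u v = deg w v := by
            rw [deg]
            exact Finset.sum_congr rfl fun u _ => hG.w_symm u v
          rw [this]
          ring
        calc ∑ u, ∑ v, w u v * (2 * f u ^ 2 + 2 * f v ^ 2)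
            = ∑ u, ∑ v, (w u v * (2 * f u ^ 2) + w u v * (2 * f v ^ 2)) := by
              refine Finset.sum_congr rfl fun u _ => Finset.sum_congr rfl fun v _ => ?_
              ring
          _ = (∑ u, ∑ v, w u v * (2 * f u ^ 2)) + ∑ u, ∑ v, w u v * (2 * f v ^ 2) := by
              simp only [Finset.sum_add_distrib]
          _ = 4 * ∑ u, deg w u * f u ^ 2 := by rw [t1, t2]; ring
      have h8 : ∑ u, deg w u * f u ^ 2 ≤ dm * M := by
        rw [hMdef, Finset.mul_sum]
        refine Finset.sum_le_sum fun u _ => ?_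
        calc deg w u * f u ^ 2 ≤ dm * μ u * f u ^ 2 :=
              mul_le_mul_of_nonneg_right (hdm_le u) (sq_nonneg _)
          _ = dm * (μ u * f u ^ 2) := by ring
      linarith
    calc ∑ u, ∑ v, w u v * (|f u - sgn u v * f v| * (|f u| + |f v|))
        = ∑ p : Fin N × Fin N, (Real.sqrt (w p.1 p.2) * |f p.1 - sgn p.1 p.2 * f p.2|)
            * (Real.sqrt (w p.1 p.2) * (|f p.1| + |f p.2|)) := h1
      _ ≤ Real.sqrt (∑ p : Fin N × Fin N,
              (Real.sqrt (w p.1 p.2) * |f p.1 - sgn p.1 p.2 * f p.2|) ^ 2)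
            * Real.sqrt (∑ p : Fin N × Fin N,
              (Real.sqrt (w p.1 p.2) * (|f p.1| + |f p.2|)) ^ 2) := h2
      _ ≤ Real.sqrt (2 * Rq * M) * Real.sqrt (4 * (dm * M)) := by
          rw [h3]
          exact mul_le_mul_of_nonneg_left (Real.sqrt_le_sqrt h4) (Real.sqrt_nonneg _)
  have halg : 1 / 2 * (Real.sqrt (2 * Rq * M) * Real.sqrt (4 * (dm * M)))
      = Real.sqrt (2 * dm * Rq) * M := by
    have h1 : (0:ℝ) ≤ 2 * Rq * M := mul_nonneg (mul_nonneg (by norm_num) hRq0) hM.le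
    rw [← Real.sqrt_mul h1]
    have h2 : (2 * Rq * M) * (4 * (dm * M)) = (2 * dm * Rq) * (2 * M) ^ 2 := by ring
    rw [h2, Real.sqrt_mul (mul_nonneg (mul_nonneg (by norm_num) hdm0) hRq0),
      Real.sqrt_sq (by linarith : (0:ℝ) ≤ 2 * M)]
    ring
  have hfinal : ∑ s ∈ S.filter (fun s => 0 < s), (s - SignedGraphAux.predS S s)
        * (2 * Epos w sgn (Vp f s) (Vm f s) + Eneg w sgn (Vp f s) (Vp f s)
          + Eneg w sgn (Vm f s) (Vm f s) + EE w (Vp f s ∪ Vm f s) (Vp f s ∪ Vm f s)ᶜ)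
      ≤ Real.sqrt (2 * dm * Rq) * M := by
    rw [hNsum]
    have step := mul_le_mul_of_nonneg_left hCS (by norm_num : (0:ℝ) ≤ 1 / 2)
    linarith [hsym, step, halg.le, halg.ge]
  -- pigeonhole
  obtain ⟨s, hsmem, hsle⟩ : ∃ s ∈ S.filter (fun s => 0 < s),
      2 * Epos w sgn (Vp f s) (Vm f s) + Eneg w sgn (Vp f s) (Vp f s)
        + Eneg w sgn (Vm f s) (Vm f s) + EE w (Vp f s ∪ Vm f s) (Vp f s ∪ Vm f s)ᶜ
      ≤ Real.sqrt (2 * dm * Rq) * vol μ (Vp f s ∪ Vm f s) := by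
    by_contra hcon
    push_neg at hcon
    have hlt : ∑ s ∈ S.filter (fun s => 0 < s), (s - SignedGraphAux.predS S s)
          * (Real.sqrt (2 * dm * Rq) * vol μ (Vp f s ∪ Vm f s))
        < ∑ s ∈ S.filter (fun s => 0 < s), (s - SignedGraphAux.predS S s)
          * (2 * Epos w sgn (Vp f s) (Vm f s) + Eneg w sgn (Vp f s) (Vp f s)
            + Eneg w sgn (Vm f s) (Vm f s) + EE w (Vp f s ∪ Vm f s) (Vp f s ∪ Vm f s)ᶜ) := by
      refine Finset.sum_lt_sum_of_nonempty hSpne fun s hs => ?_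
      have hgap : 0 < s - SignedGraphAux.predS S s :=
        sub_pos.2 (SignedGraphAux.predS_lt (Finset.mem_filter.1 hs).2)
      exact mul_lt_mul_of_pos_left (hcon s hs) hgap
    have heq : ∑ s ∈ S.filter (fun s => 0 < s), (s - SignedGraphAux.predS S s)
          * (Real.sqrt (2 * dm * Rq) * vol μ (Vp f s ∪ Vm f s))
        = Real.sqrt (2 * dm * Rq) * ∑ s ∈ S.filter (fun s => 0 < s),
            (s - SignedGraphAux.predS S s) * vol μ (Vp f s ∪ Vm f s) := by
      rw [Finset.mul_sum]
      exact Finset.sum_congr rfl fun s _ => by ring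
    rw [heq, hD] at hlt
    linarith [hfinal]
  have hs0 : 0 < s := (Finset.mem_filter.1 hsmem).2
  obtain ⟨u₁, hu₁⟩ : ∃ u, f u ^ 2 = s := by
    have hm := (Finset.mem_filter.1 hsmem).1
    rw [hSdef] at hm
    rcases Finset.mem_insert.1 hm with h | h
    · exact absurd h.symm hs0.ne
    · obtain ⟨u, -, hu⟩ := Finset.mem_image.1 h
      exact ⟨u, hu⟩
  have hu₁le : s ≤ f u₁ ^ 2 := hu₁.ge
  have hmem₁ : u₁ ∈ Vp f s ∪ Vm f s := (hU s hs0 u₁).2 hu₁le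
  have hne : (Vp f s ∪ Vm f s).Nonempty := ⟨u₁, hmem₁⟩
  have hvolpos : 0 < vol μ (Vp f s ∪ Vm f s) :=
    Finset.sum_pos (fun u _ => hμ u) hne
  refine ⟨s, ⟨hs0.le, ?_⟩, hne, ?_⟩
  · rw [← hu₁]
    exact le_ciSup (f := fun u => f u ^ 2)
      (Set.Finite.bddAbove (Set.finite_range fun u => f u ^ 2)) u₁
  · rw [betaR, div_le_iff₀ hvolpos]
    exact hsle

end SignedGraph
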